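/- Let A be the adjacency matrix of a simple undirected graph G on n vertices, let 3 ≤ k ≤ n, let m ∈ ℕ^k with m_i ≥ 1 for all i and Σ_{i=1}^k m_i = n, and suppose m_2 = m_3 = … = m_{k−1}. If for r = 1 every partition matrix X ∈ P_m satisfies ⟨A, X B_{1,k} Xᵀ⟩ > 0, then bdw(A) > m_2. -/

import Mathlib

open Matrix Finset

attribute [local instance] Classical.propDecidable

noncomputable section

/-- Trace inner product `⟨A,B⟩ = trace(Aᵀ B)`. -/
def traceInner {n : ℕ} (A B : Matrix (Fin n) (Fin n) ℝ) : ℝ :=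
  Matrix.trace (Aᵀ * B)

/-- `A` is the adjacency matrix of a simple undirected graph:
symmetric 0–1 matrix with zero diagonal. -/
def IsAdjacency {n : ℕ} (A : Matrix (Fin n) (Fin n) ℝ) : Prop :=
  (∀ i j, A i j = 0 ∨ A i j = 1) ∧ (∀ i j, A i j = A j i) ∧ ∀ i, A i i = 0

/-- Bandwidth of the graph with adjacency matrix `A` under the labeling `φ`. -/
def bdwLabel {n : ℕ} (A : Matrix (Fin n) (Fin n) ℝ) (φ : Equiv.Perm (Fin n)) : ℕ :=
  Finset.sup Finset.univ fun p : Fin n × Fin n =>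
    if A p.1 p.2 ≠ 0 then (((φ p.1 : ℕ) : ℤ) - ((φ p.2 : ℕ) : ℤ)).natAbs else 0

/-- Bandwidth of the graph with adjacency matrix `A`:
minimum over all labelings. -/
def bdw {n : ℕ} (A : Matrix (Fin n) (Fin n) ℝ) : ℕ :=
  ⨅ φ : Equiv.Perm (Fin n), bdwLabel A φ

/-- `n × k` partition matrices for block sizes `m 0, …, m (k-1)`. -/
def IsPartitionMatrix (n k : ℕ) (m : ℕ → ℕ) (X : Matrix (Fin n) (Fin k) ℝ) : Prop :=
  (∀ i j, X i j = 0 ∨ X i j = 1) ∧ (∀ i, ∑ j, X i j = 1) ∧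
  ∀ j : Fin k, ∑ i, X i j = (m (j : ℕ) : ℝ)

/-- The matrix `B_{r,k}`, with `(B_{r,k})_{uv} = 1` iff `|u - v| > r`. -/
def Bmat (k r : ℕ) : Matrix (Fin k) (Fin k) ℝ :=
  Matrix.of fun u v : Fin k =>
    if (r : ℤ) < |((u : ℕ) : ℤ) - ((v : ℕ) : ℤ)| then 1 else 0

/-- The basic partition matrix `X̄`: the first `m 0` vertices in block `0`,
the next `m 1` vertices in block `1`, and so on. -/
def basicPartition (n k : ℕ) (m : ℕ → ℕ) : Matrix (Fin n) (Fin k) ℝ :=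
  Matrix.of fun (i : Fin n) (j : Fin k) =>
    if (∑ l ∈ Finset.range (j : ℕ), m l) ≤ (i : ℕ) ∧
        (i : ℕ) < ∑ l ∈ Finset.range ((j : ℕ) + 1), m l then 1 else 0

/-- Permutation matrix of a permutation `σ`. -/
def permMatrix {n : ℕ} (σ : Equiv.Perm (Fin n)) : Matrix (Fin n) (Fin n) ℝ :=
  Matrix.of fun i j => if σ i = j then 1 else 0


/-! If some labeling `φ` had bandwidth at most `m 1`, cut the positions `0, …, n - 1` into
consecutive intervals of lengths `m 0, …, m (k - 1)` and put vertex `i` into the block whose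
interval contains `φ i`. This gives a partition matrix `X`. Every interior interval has length
`m 1`, so positions in blocks `u, v` with `|u - v| ≥ 2` are more than `m 1` apart; hence no edge
joins such blocks and `⟨A, X B_{1,k} Xᵀ⟩ = ∑ A i j * (B_{1,k})_{b i, b j} = 0`. -/

lemma traceInner_eq_sum {n : ℕ} (A M : Matrix (Fin n) (Fin n) ℝ) :
    traceInner A M = ∑ i, ∑ j, A i j * M i j := by
  simp only [traceInner, trace, diag_apply, mul_apply, transpose_apply]
  exact sum_comm

lemma Bmat_apply_eq_zero {k r : ℕ} {u v : Fin k} (h : |((u : ℕ) : ℤ) - (v : ℕ)| ≤ r) :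
    Bmat k r u v = 0 :=
  if_neg h.not_gt

lemma natAbs_sub_le_bdwLabel {n : ℕ} {A : Matrix (Fin n) (Fin n) ℝ} (φ : Equiv.Perm (Fin n))
    {i j : Fin n} (h : A i j ≠ 0) :
    (((φ i : ℕ) : ℤ) - (φ j : ℕ)).natAbs ≤ bdwLabel A φ := by
  have := le_sup (f := fun p : Fin n × Fin n =>
    if A p.1 p.2 ≠ 0 then (((φ p.1 : ℕ) : ℤ) - ((φ p.2 : ℕ) : ℤ)).natAbs else 0)
    (mem_univ (i, j))
  simpa [bdwLabel, h] using this

section AssignmentMatrix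

variable {ι κ : Type*} [DecidableEq κ]

def assignmentMatrix (b : ι → κ) : Matrix ι κ ℝ :=
  of fun i j => if b i = j then 1 else 0

lemma assignmentMatrix_mul_mul_transpose_apply [Fintype κ] (b : ι → κ) (B : Matrix κ κ ℝ)
    (i i' : ι) :
    (assignmentMatrix b * B * (assignmentMatrix b)ᵀ) i i' = B (b i) (b i') := by
  simp [assignmentMatrix, mul_apply]

lemma isPartitionMatrix_assignmentMatrix {n k : ℕ} {m : ℕ → ℕ} (b : Fin n → Fin k)
    (hb : ∀ j, #{i | b i = j} = m j) :
    IsPartitionMatrix n k m (assignmentMatrix b) := by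
  refine ⟨fun i j => ?_, fun i => ?_, fun j => ?_⟩
  · simp only [assignmentMatrix, of_apply]
    split_ifs <;> simp
  · simp [assignmentMatrix]
  · simp [assignmentMatrix, ← hb j, sum_boole]

lemma traceInner_assignmentMatrix_Bmat_one_eq_zero {n k : ℕ} {A : Matrix (Fin n) (Fin n) ℝ}
    {b : Fin n → Fin k} (hb : ∀ i j, A i j ≠ 0 → |((b i : ℕ) : ℤ) - (b j : ℕ)| ≤ 1) :
    traceInner A (assignmentMatrix b * Bmat k 1 * (assignmentMatrix b)ᵀ) = 0 := by
  rw [traceInner_eq_sum]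
  refine sum_eq_zero fun i _ => sum_eq_zero fun j _ => ?_
  rw [assignmentMatrix_mul_mul_transpose_apply]
  by_cases hA : A i j = 0
  · rw [hA, zero_mul]
  · rw [Bmat_apply_eq_zero (hb i j hA), mul_zero]

end AssignmentMatrix

lemma card_filter_fst_eq_of_equiv {ι : Type*} [Fintype ι] {k : ℕ} {m : ℕ → ℕ}
    (e : ι ≃ (j : Fin k) × Fin (m j)) (j : Fin k) :
    #{i | (e i).1 = j} = m j := by
  rw [card_filter, Fintype.sum_equiv e _ (fun p => if p.1 = j then 1 else 0) fun _ => rfl,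
    Fintype.sum_sigma, sum_eq_single j (fun b _ hb => by simp [hb]) (by simp)]
  simp

section Blocks

variable {n k : ℕ} {m : ℕ → ℕ}

def blockEquiv (hsum : ∑ i ∈ range k, m i = n) : Fin n ≃ (j : Fin k) × Fin (m j) :=
  (finSigmaFinEquiv.trans (finCongr (by rwa [Fin.sum_univ_eq_sum_range (fun i => m i)]))).symm

lemma blockEquiv_symm_apply_val (hsum : ∑ i ∈ range k, m i = n) (p : (j : Fin k) × Fin (m j)) :
    ((blockEquiv hsum).symm p : ℕ) = ∑ l ∈ range p.1, m l + p.2 := by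
  simp [blockEquiv, Fin.sum_univ_eq_sum_range (fun i => m i)]

lemma val_add_lt_of_blockEquiv_add_two_le (hsum : ∑ i ∈ range k, m i = n) {s t : Fin n}
    (h : ((blockEquiv hsum s).1 : ℕ) + 2 ≤ (blockEquiv hsum t).1) :
    (s : ℕ) + m ((blockEquiv hsum s).1 + 1) < t := by
  have hs := blockEquiv_symm_apply_val hsum (blockEquiv hsum s)
  have ht := blockEquiv_symm_apply_val hsum (blockEquiv hsum t)
  simp only [Equiv.symm_apply_apply] at hs ht
  have hlt : ((blockEquiv hsum s).2 : ℕ) < m (blockEquiv hsum s).1 := (blockEquiv hsum s).2.isLt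
  have hmono : ∑ l ∈ range ((blockEquiv hsum s).1 + 2), m l ≤
      ∑ l ∈ range (blockEquiv hsum t).1, m l :=
    sum_le_sum_of_subset (range_subset_range.2 h)
  rw [sum_range_succ, sum_range_succ] at hmono
  omega

lemma abs_blockEquiv_sub_le_one (hsum : ∑ i ∈ range k, m i = n)
    (hmid : ∀ i, 1 ≤ i → i ≤ k - 2 → m i = m 1) {s t : Fin n}
    (hst : (((s : ℕ) : ℤ) - (t : ℕ)).natAbs ≤ m 1) :
    |(((blockEquiv hsum s).1 : ℕ) : ℤ) - ((blockEquiv hsum t).1 : ℕ)| ≤ 1 := by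
  have far (x y : Fin n) (h : ((blockEquiv hsum x).1 : ℕ) + 2 ≤ (blockEquiv hsum y).1) :
      (x : ℕ) + m 1 < y := by
    have hk : ((blockEquiv hsum y).1 : ℕ) < k := (blockEquiv hsum y).1.isLt
    rw [← hmid ((blockEquiv hsum x).1 + 1) (by omega) (by omega)]
    exact val_add_lt_of_blockEquiv_add_two_le hsum h
  rw [abs_le]
  constructor
  · by_contra! h
    have := far s t (by omega)
    omega
  · by_contra! h
    have := far t s (by omega)
    omega

end Blocks

theorem bandwidth_gt_of_equal_interior_blocks_general
    (n k : ℕ) (m : ℕ → ℕ) (A : Matrix (Fin n) (Fin n) ℝ)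
    (hsum : ∑ i ∈ Finset.range k, m i = n)
    (hmid : ∀ i, 1 ≤ i → i ≤ k - 2 → m i = m 1)
    (hpos : ∀ X : Matrix (Fin n) (Fin k) ℝ, IsPartitionMatrix n k m X →
      0 < traceInner A (X * Bmat k 1 * Xᵀ)) :
    m 1 < bdw A := by
  refine le_ciInf (f := bdwLabel A) fun φ => ?_
  by_contra! hφ
  let block i := (blockEquiv hsum (φ i)).1
  have hX : IsPartitionMatrix n k m (assignmentMatrix block) :=
    isPartitionMatrix_assignmentMatrix _ (card_filter_fst_eq_of_equiv (φ.trans (blockEquiv hsum)))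
  have hadj (i j) (hA : A i j ≠ 0) : |((block i : ℕ) : ℤ) - (block j : ℕ)| ≤ 1 :=
    abs_blockEquiv_sub_le_one hsum hmid ((natAbs_sub_le_bdwLabel φ hA).trans (by omega))
  exact (hpos _ hX).ne' (traceInner_assignmentMatrix_Bmat_one_eq_zero hadj)

/-- Corollary 1 of the paper: `r = 1`, all interior block sizes
equal; if every partition matrix `X ∈ P_m` satisfies `⟨A, X B_{1,k} Xᵀ⟩ > 0`,
then `bdw(A) > m_2` (0-indexed: `m 1`). -/
theorem bandwidth_gt_of_equal_interior_blocks
    (n k : ℕ) (m : ℕ → ℕ) (A : Matrix (Fin n) (Fin n) ℝ)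
    (hA : IsAdjacency A) (hk3 : 3 ≤ k) (hkn : k ≤ n)
    (hm : ∀ i < k, 1 ≤ m i) (hsum : ∑ i ∈ Finset.range k, m i = n)
    (hmid : ∀ i, 1 ≤ i → i ≤ k - 2 → m i = m 1)
    (hpos : ∀ X : Matrix (Fin n) (Fin k) ℝ, IsPartitionMatrix n k m X →
      0 < traceInner A (X * Bmat k 1 * Xᵀ)) :
    m 1 < bdw A :=
  bandwidth_gt_of_equal_interior_blocks_general n k m A hsum hmid hpos

end
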